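/- For all positive integers m and n, the ordered Ramsey number of the nested matching NM_m versus the complete ordered graph on n+1 vertices satisfies the lower bound r_<(NM_m, K_{n+1}) ≥ (2m − 1)n + 1; that is, there is a red-blue coloring of the edges of the complete ordered graph on (2m−1)n vertices (n consecutive red cliques of size 2m−1 with all edges between different cliques colored blue) with no red copy of NM_m and no blue copy of K_{n+1} as ordered subgraphs. -/

import Mathlib

/-- `G` (an ordered graph on `[m]`, modeled on `Fin m`) is an ordered subgraph of `H`
(on `Fin N`): there is a strictly increasing map preserving edges. -/
def OrderedSubgraph {m N : ℕ} (G : SimpleGraph (Fin m)) (H : SimpleGraph (Fin N)) : Prop :=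
  ∃ φ : Fin m → Fin N, StrictMono φ ∧ ∀ i j : Fin m, G.Adj i j → H.Adj (φ i) (φ j)

/-- The ordered Ramsey number `r_<(G, H)`: the least `N` such that every red-blue coloring
of the edges of the complete ordered graph on `N` vertices (given by its red graph `R`)
contains a red ordered copy of `G` or a blue ordered copy of `H`. -/
noncomputable def orderedRamsey {m k : ℕ} (G : SimpleGraph (Fin m)) (H : SimpleGraph (Fin k)) : ℕ :=
  sInf {N : ℕ | ∀ R : SimpleGraph (Fin N), OrderedSubgraph G R ∨ OrderedSubgraph H Rᶜ}

/-- The nested matching `NM_n`: the ordered graph on `2n` vertices with edges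
`{i, 2n - i + 1}` (1-indexed), i.e. `i + j = 2n - 1` in 0-indexed form. -/
def nestedMatching (n : ℕ) : SimpleGraph (Fin (2 * n)) :=
  SimpleGraph.fromRel (fun i j => (i : ℕ) + (j : ℕ) = 2 * n - 1)

/-- The ordered star `S_{l,r}` on `l + r - 1` vertices: the `l`-th vertex (1-indexed)
is adjacent to all other vertices. -/
def orderedStar (l r : ℕ) : SimpleGraph (Fin (l + r - 1)) :=
  SimpleGraph.fromRel (fun i _ => (i : ℕ) = l - 1)

/-- The join `G + H` of ordered graphs, identifying the rightmost vertex of `G`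
with the leftmost vertex of `H`. -/
def orderedJoin {m k : ℕ} (G : SimpleGraph (Fin m)) (H : SimpleGraph (Fin k)) :
    SimpleGraph (Fin (m + k - 1)) :=
  SimpleGraph.fromRel (fun i j =>
    (∃ a b : Fin m, G.Adj a b ∧ (i : ℕ) = (a : ℕ) ∧ (j : ℕ) = (b : ℕ)) ∨
    (∃ a b : Fin k, H.Adj a b ∧ (i : ℕ) = (a : ℕ) + (m - 1) ∧ (j : ℕ) = (b : ℕ) + (m - 1)))

/-- A connected ordered graph on `m` vertices is `n`-good if
`r_<(G, K_n) = (m-1)(n-1) + 1`. -/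
def IsNGood {m : ℕ} (n : ℕ) (G : SimpleGraph (Fin m)) : Prop :=
  G.Connected ∧ orderedRamsey G (⊤ : SimpleGraph (Fin n)) = (m - 1) * (n - 1) + 1

/-- Monotone caterpillar graphs: joins `S_{l₁,r₁} + ⋯ + S_{l_k,r_k}` of one-sided
ordered stars. -/
inductive IsMonotoneCaterpillar : ∀ {m : ℕ}, SimpleGraph (Fin m) → Prop
  | star {l r : ℕ} (hl : 1 ≤ l) (hr : 1 ≤ r) (h : l = 1 ∨ r = 1) :
      IsMonotoneCaterpillar (orderedStar l r)
  | join {m l r : ℕ} {G : SimpleGraph (Fin m)} (hl : 1 ≤ l) (hr : 1 ≤ r) (h : l = 1 ∨ r = 1)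
      (hG : IsMonotoneCaterpillar G) : IsMonotoneCaterpillar (orderedJoin G (orderedStar l r))

/-- A route in the `N × N` grid: a sequence of positions going only right or down. -/
def IsRoute {N : ℕ} (s : List (Fin N × Fin N)) : Prop :=
  s.Chain' (fun p q =>
    ((q.1 : ℕ) = (p.1 : ℕ) + 1 ∧ q.2 = p.2) ∨ (q.1 = p.1 ∧ (q.2 : ℕ) = (p.2 : ℕ) + 1))

/-!
Color the edges of `K_{(2m-1)n}` red inside the `n` consecutive blocks of `2m - 1` vertices and
blue between blocks. A red edge joins two vertices less than `2m - 1` apart, whereas a strictly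
increasing embedding stretches the outer edge `{1, 2m}` of `NM_m` over at least `2m - 1` steps;
and a blue clique meets each block at most once, so it has at most `n` vertices.
The Ramsey number has to be shown finite first, since `sInf ∅ = 0`; this is Ramsey's theorem.
-/

open Finset SimpleGraph

section OrderedSubgraph

variable {a b c : ℕ}

theorem OrderedSubgraph.trans {G : SimpleGraph (Fin a)} {H : SimpleGraph (Fin b)}
    {K : SimpleGraph (Fin c)} (hGH : OrderedSubgraph G H) (hHK : OrderedSubgraph H K) :
    OrderedSubgraph G K := by
  obtain ⟨φ, hφ, hφadj⟩ := hGH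
  obtain ⟨ψ, hψ, hψadj⟩ := hHK
  exact ⟨ψ ∘ φ, hψ.comp hφ, fun i j h => hψadj _ _ (hφadj _ _ h)⟩

theorem orderedSubgraph_top (G : SimpleGraph (Fin a)) :
    OrderedSubgraph G (⊤ : SimpleGraph (Fin a)) :=
  ⟨id, strictMono_id, fun _ _ h => h.ne⟩

theorem orderedSubgraph_comap {ψ : Fin a → Fin b} (hψ : StrictMono ψ)
    (H : SimpleGraph (Fin b)) : OrderedSubgraph (H.comap ψ) H :=
  ⟨ψ, hψ, fun _ _ h => h⟩

theorem orderedSubgraph_compl_comap {ψ : Fin a → Fin b} (hψ : StrictMono ψ)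
    (H : SimpleGraph (Fin b)) : OrderedSubgraph (H.comap ψ)ᶜ Hᶜ :=
  ⟨ψ, hψ, fun _ _ h => ⟨hψ.injective.ne h.1, h.2⟩⟩

theorem SimpleGraph.IsNClique.orderedSubgraph_top {R : SimpleGraph (Fin b)} {s : Finset (Fin b)}
    (hs : R.IsNClique a s) : OrderedSubgraph (⊤ : SimpleGraph (Fin a)) R := by
  let φ := s.orderEmbOfFin hs.card_eq
  refine ⟨φ, φ.strictMono, fun i j hij => ?_⟩
  exact hs.isClique (s.orderEmbOfFin_mem _ i) (s.orderEmbOfFin_mem _ j) (φ.injective.ne hij)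

end OrderedSubgraph

section Ramsey

variable {V : Type*}

theorem exists_isNClique_succ_of_forall_adj {G : SimpleGraph V} {v : V} {A U : Finset V} {s : ℕ}
    (hv : v ∈ U) (hAU : A ⊆ U) (hA : ∀ w ∈ A, G.Adj v w)
    (hs : ∃ c ⊆ A, G.IsNClique s c) :
    ∃ c ⊆ U, G.IsNClique (s + 1) c := by
  classical
  obtain ⟨c, hcA, hc⟩ := hs
  exact ⟨insert v c, insert_subset hv (hcA.trans hAU), hc.insert fun w hw => hA w (hcA hw)⟩

theorem exists_isNClique_or_isNClique_compl_succ_succ {s t N₁ N₂ : ℕ}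
    (h₁ : ∀ (G : SimpleGraph V) (U : Finset V), N₁ ≤ #U →
      (∃ c ⊆ U, G.IsNClique s c) ∨ ∃ c ⊆ U, Gᶜ.IsNClique (t + 1) c)
    (h₂ : ∀ (G : SimpleGraph V) (U : Finset V), N₂ ≤ #U →
      (∃ c ⊆ U, G.IsNClique (s + 1) c) ∨ ∃ c ⊆ U, Gᶜ.IsNClique t c)
    (G : SimpleGraph V) (U : Finset V) (hU : N₁ + N₂ + 1 ≤ #U) :
    (∃ c ⊆ U, G.IsNClique (s + 1) c) ∨ ∃ c ⊆ U, Gᶜ.IsNClique (t + 1) c := by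
  classical
  obtain ⟨v, hv⟩ : U.Nonempty := card_pos.1 (by omega)
  set A := (U.erase v).filter (G.Adj v)
  set B := (U.erase v).filter (fun w => ¬ G.Adj v w)
  have hAU : A ⊆ U := (filter_subset _ _).trans (erase_subset _ _)
  have hBU : B ⊆ U := (filter_subset _ _).trans (erase_subset _ _)
  have hAB : #A + #B = #U - 1 := by
    rw [card_filter_add_card_filter_not, card_erase_of_mem hv]
  rcases (by omega : N₁ ≤ #A ∨ N₂ ≤ #B) with hA | hB
  · refine (h₁ G A hA).imp (exists_isNClique_succ_of_forall_adj hv hAU fun w hw => ?_)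
      fun ⟨c, hcA, hc⟩ => ⟨c, hcA.trans hAU, hc⟩
    exact (mem_filter.1 hw).2
  · refine (h₂ G B hB).imp (fun ⟨c, hcB, hc⟩ => ⟨c, hcB.trans hBU, hc⟩)
      (exists_isNClique_succ_of_forall_adj hv hBU fun w hw => ?_)
    obtain ⟨hwU, hvw⟩ := mem_filter.1 hw
    exact ⟨(ne_of_mem_erase hwU).symm, hvw⟩

theorem exists_isNClique_or_isNClique_compl :
    ∀ s t : ℕ, ∃ N, ∀ {V : Type*} (G : SimpleGraph V) (U : Finset V), N ≤ #U →
      (∃ c ⊆ U, G.IsNClique s c) ∨ ∃ c ⊆ U, Gᶜ.IsNClique t c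
  | 0, _ => ⟨0, fun _ _ _ => .inl ⟨∅, empty_subset _, isNClique_empty.2 rfl⟩⟩
  | _ + 1, 0 => ⟨0, fun _ _ _ => .inr ⟨∅, empty_subset _, isNClique_empty.2 rfl⟩⟩
  | s + 1, t + 1 => by
    obtain ⟨N₁, h₁⟩ := exists_isNClique_or_isNClique_compl s (t + 1)
    obtain ⟨N₂, h₂⟩ := exists_isNClique_or_isNClique_compl (s + 1) t
    exact ⟨N₁ + N₂ + 1, exists_isNClique_or_isNClique_compl_succ_succ h₁ h₂⟩

end Ramsey

theorem exists_forall_orderedSubgraph_or_compl {a b : ℕ} (G : SimpleGraph (Fin a))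
    (H : SimpleGraph (Fin b)) :
    ∃ N, ∀ R : SimpleGraph (Fin N), OrderedSubgraph G R ∨ OrderedSubgraph H Rᶜ := by
  obtain ⟨N, hN⟩ := exists_isNClique_or_isNClique_compl a b
  refine ⟨N, fun R => ?_⟩
  rcases hN R univ (by simp) with ⟨c, -, hR⟩ | ⟨c, -, hR⟩
  · exact .inl ((orderedSubgraph_top G).trans hR.orderedSubgraph_top)
  · exact .inr ((orderedSubgraph_top H).trans hR.orderedSubgraph_top)

theorem lt_orderedRamsey {a b M : ℕ} {G : SimpleGraph (Fin a)} {H : SimpleGraph (Fin b)}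
    (R : SimpleGraph (Fin M)) (hG : ¬ OrderedSubgraph G R) (hH : ¬ OrderedSubgraph H Rᶜ) :
    M < orderedRamsey G H := by
  refine le_csInf (exists_forall_orderedSubgraph_or_compl G H) fun N hN => ?_
  by_contra! hNM
  have hψ := Fin.strictMono_castLE (Nat.le_of_lt_succ hNM)
  rcases hN (R.comap (Fin.castLE _)) with h | h
  · exact hG (h.trans (orderedSubgraph_comap hψ R))
  · exact hH (h.trans (orderedSubgraph_compl_comap hψ R))

theorem Fin.val_sub_val_le_of_strictMono {a b : ℕ} {f : Fin a → Fin b} (hf : StrictMono f)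
    (i j : Fin a) : (j : ℕ) - i ≤ f j - f i := by
  have hcard : #(Icc i j) ≤ #(Icc (f i) (f j)) :=
    card_le_card_of_injOn f (fun x hx => by
      simp only [coe_Icc, Set.mem_Icc] at hx ⊢
      exact ⟨hf.monotone hx.1, hf.monotone hx.2⟩) hf.injective.injOn
  simp only [Fin.card_Icc] at hcard
  omega

def blockGraph (b N : ℕ) : SimpleGraph (Fin N) :=
  SimpleGraph.fromRel fun i j : Fin N => (i : ℕ) / b = (j : ℕ) / b

theorem val_lt_add_of_blockGraph_adj {b N : ℕ} (hb : 0 < b) {x y : Fin N}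
    (h : (blockGraph b N).Adj x y) :
    (y : ℕ) < x + b := by
  have hxy : (x : ℕ) / b = y / b := ((fromRel_adj _ _ _).1 h).2.elim id Eq.symm
  have hx := Nat.div_add_mod (x : ℕ) b
  have hy := Nat.div_add_mod (y : ℕ) b
  have hxb := Nat.mod_lt (x : ℕ) hb
  have hyb := Nat.mod_lt (y : ℕ) hb
  rw [hxy] at hx
  omega

theorem not_orderedSubgraph_nestedMatching_blockGraph {m : ℕ} (hm : 1 ≤ m) (N : ℕ) :
    ¬ OrderedSubgraph (nestedMatching m) (blockGraph (2 * m - 1) N) := by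
  rintro ⟨φ, hφ, hφadj⟩
  let first : Fin (2 * m) := ⟨0, by omega⟩
  let last : Fin (2 * m) := ⟨2 * m - 1, by omega⟩
  have hadj : (nestedMatching m).Adj first last :=
    (fromRel_adj _ _ _).2
      ⟨Fin.ne_of_val_ne (by simp [first, last]; omega), .inl (by simp [first, last])⟩
  have hspan : 2 * m - 1 ≤ (φ last : ℕ) - φ first :=
    Fin.val_sub_val_le_of_strictMono hφ first last
  have hred := val_lt_add_of_blockGraph_adj (by omega) (hφadj _ _ hadj)
  omega

theorem not_orderedSubgraph_top_compl_blockGraph (b n : ℕ) :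
    ¬ OrderedSubgraph (⊤ : SimpleGraph (Fin (n + 1))) (blockGraph b (b * n))ᶜ := by
  rintro ⟨φ, -, hφadj⟩
  let block : Fin (n + 1) → Fin n := fun k => ⟨φ k / b, Nat.div_lt_of_lt_mul (φ k).isLt⟩
  have hblock : Function.Injective block := fun k l hkl => by
    by_contra hkl'
    exact (hφadj k l hkl').2 ⟨(hφadj k l hkl').1, .inl (Fin.val_eq_of_eq hkl)⟩
  simpa using Fintype.card_le_of_injective block hblock

theorem stmt_7_general (m n : ℕ) (hm : 1 ≤ m) :
    (2 * m - 1) * n + 1 ≤ orderedRamsey (nestedMatching m) (⊤ : SimpleGraph (Fin (n + 1))) ∧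
    ¬ OrderedSubgraph (nestedMatching m)
        (SimpleGraph.fromRel
          (fun i j : Fin ((2 * m - 1) * n) => (i : ℕ) / (2 * m - 1) = (j : ℕ) / (2 * m - 1))) ∧
    ¬ OrderedSubgraph (⊤ : SimpleGraph (Fin (n + 1)))
        (SimpleGraph.fromRel
          (fun i j : Fin ((2 * m - 1) * n) =>
            (i : ℕ) / (2 * m - 1) = (j : ℕ) / (2 * m - 1)))ᶜ := by
  have hred := not_orderedSubgraph_nestedMatching_blockGraph hm ((2 * m - 1) * n)
  have hblue := not_orderedSubgraph_top_compl_blockGraph (2 * m - 1) n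
  exact ⟨lt_orderedRamsey _ hred hblue, hred, hblue⟩

/-- For all positive integers `m` and `n`,
`r_<(NM_m, K_{n+1}) ≥ (2m - 1) n + 1`; that is, there is a red-blue coloring of the edges
of `K_{(2m-1)n}` (given by its red graph: `n` consecutive red cliques of size `2m - 1`,
all edges between different cliques blue) with no red copy of `NM_m` and no blue copy of
`K_{n+1}`. -/
theorem stmt_7 (m n : ℕ) (hm : 1 ≤ m) (hn : 1 ≤ n) :
    (2 * m - 1) * n + 1 ≤ orderedRamsey (nestedMatching m) (⊤ : SimpleGraph (Fin (n + 1))) ∧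
    ¬ OrderedSubgraph (nestedMatching m)
        (SimpleGraph.fromRel
          (fun i j : Fin ((2 * m - 1) * n) => (i : ℕ) / (2 * m - 1) = (j : ℕ) / (2 * m - 1))) ∧
    ¬ OrderedSubgraph (⊤ : SimpleGraph (Fin (n + 1)))
        (SimpleGraph.fromRel
          (fun i j : Fin ((2 * m - 1) * n) =>
            (i : ℕ) / (2 * m - 1) = (j : ℕ) / (2 * m - 1)))ᶜ :=
  stmt_7_general m n hm
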